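/- Genus-zero lemma for spanning subgraphs. Let G = (H, σ, θ) be a combinatorial map encoding an orientable ribbon graph. If k(E) − bc(E) + n(E) = 0 (i.e., the surface G has genus zero), then k(F) − bc(F) + n(F) = 0 for every subset F ⊆ E. -/

import Mathlib

open Finset
open scoped Classical

/-- The permutation `θ_F` acting as `θ` on the half-edges belonging to edges of the
spanning subgraph (encoded by the `θ`-invariant set `S` of half-edges) and as the
identity elsewhere.  Defined whenever `S` is `θ`-invariant and `θ` is an involution
(and as the identity permutation otherwise). -/
noncomputable def restrictPerm {H : Type*} [DecidableEq H] (θ : Equiv.Perm H) (S : Finset H) :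
    Equiv.Perm H :=
  if hcl : (∀ a ∈ S, θ a ∈ S) ∧ (∀ a, θ (θ a) = a) then
    { toFun := fun a => if a ∈ S then θ a else a
      invFun := fun a => if a ∈ S then θ a else a
      left_inv := fun a => by
        by_cases h : a ∈ S
        · simp [h, hcl.1 a h, hcl.2 a]
        · simp [h]
      right_inv := fun a => by
        by_cases h : a ∈ S
        · simp [h, hcl.1 a h, hcl.2 a]
        · simp [h] }
  else 1

/-- The number of orbits of the cyclic group generated by a permutation. -/
noncomputable def permOrbits {H : Type*} [Fintype H] (π : Equiv.Perm H) : ℕ :=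
  Nat.card (MulAction.orbitRel.Quotient (Subgroup.zpowers π) H)

/-- `v(G)`: the number of vertices, i.e. the number of orbits of `σ`. -/
noncomputable def vCount {H : Type*} [Fintype H] (σ : Equiv.Perm H) : ℕ := permOrbits σ

/-- `bc(F)`: the number of boundary components of the spanning subgraph, i.e. the
number of orbits of `σ ∘ θ_F`. -/
noncomputable def bcCount {H : Type*} [Fintype H] [DecidableEq H]
    (σ θ : Equiv.Perm H) (S : Finset H) : ℕ :=
  permOrbits (σ * restrictPerm θ S)

/-- `k(F)`: the number of connected components of the spanning subgraph, i.e. the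
number of orbits of the subgroup generated by `σ` and `θ_F`. -/
noncomputable def kCount {H : Type*} [Fintype H] [DecidableEq H]
    (σ θ : Equiv.Perm H) (S : Finset H) : ℕ :=
  Nat.card (MulAction.orbitRel.Quotient
    (Subgroup.closure {σ, restrictPerm θ S} : Subgroup (Equiv.Perm H)) H)

/-- `e(F)`: the number of edges of the spanning subgraph, i.e. half the number of
half-edges in `S` (as an integer, for use in exponents). -/
def eCount {H : Type*} (S : Finset H) : ℤ := (S.card / 2 : ℕ)

/-- `r(F) = v(G) - k(F)`: the rank of the spanning subgraph. -/
noncomputable def rCount {H : Type*} [Fintype H] [DecidableEq H]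
    (σ θ : Equiv.Perm H) (S : Finset H) : ℤ :=
  (vCount σ : ℤ) - (kCount σ θ S : ℤ)

/-- `n(F) = e(F) - r(F)`: the nullity of the spanning subgraph. -/
noncomputable def nCount {H : Type*} [Fintype H] [DecidableEq H]
    (σ θ : Equiv.Perm H) (S : Finset H) : ℤ :=
  eCount S - rCount σ θ S

/-- The spanning subgraphs `F ⊆ E`, encoded as the `θ`-invariant subsets of the
set of half-edges. -/
def spanningSets {H : Type*} [Fintype H] [DecidableEq H] (θ : Equiv.Perm H) :
    Finset (Finset H) :=
  Finset.univ.filter (fun S => ∀ a ∈ S, θ a ∈ S)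


/-!
Write `g(F) = k(F) - bc(F) + n(F)`, twice the genus of `F`. Adding an edge `{a, θ a}` to `F`
multiplies `θ_F` by the transposition `(a θa)`, so the boundary permutation `σ θ_F` becomes
`σ θ_F (a θa)`. If `a` and `θ a` lie on one boundary cycle, that cycle splits (`bc` grows by at
most one) and `k` is unchanged; otherwise two boundary cycles merge (`bc` drops by at least one)
and `k` drops by at most one. Either way `g` does not decrease, so `0 = g(∅) ≤ g(F) ≤ g(E) = 0`.
-/

namespace Setoid

variable {α : Type*} {r s : Setoid α} {a b x y : α}

noncomputable def mergeClasses (r : Setoid α) (a b : α) : Setoid α :=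
  ker fun x => if r x b then Quotient.mk r a else Quotient.mk r x

lemma mergeClasses_iff : r.mergeClasses a b x y ↔
    (if r x b then Quotient.mk r a else Quotient.mk r x) =
      (if r y b then Quotient.mk r a else Quotient.mk r y) :=
  Iff.rfl

lemma le_mergeClasses : r ≤ r.mergeClasses a b := by
  intro x y hxy
  have hb : r x b ↔ r y b := ⟨r.trans' (r.symm' hxy), r.trans' hxy⟩
  rw [mergeClasses_iff, if_congr hb rfl (Quotient.sound hxy)]

lemma mergeClasses_rel : r.mergeClasses a b a b := by
  rw [mergeClasses_iff, if_pos (r.refl' b), ite_self]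

lemma mergeClasses_le (hrs : r ≤ s) (hab : s a b) : r.mergeClasses a b ≤ s := by
  intro x y hxy
  rw [mergeClasses_iff] at hxy
  split_ifs at hxy with hx hy hy
  · exact s.trans' (hrs hx) (s.symm' (hrs hy))
  · exact s.trans' (s.trans' (hrs hx) (s.symm' hab)) (hrs (Quotient.exact hxy))
  · exact s.trans' (hrs (Quotient.exact hxy)) (s.trans' hab (s.symm' (hrs hy)))
  · exact hrs (Quotient.exact hxy)

lemma map_of_le_surjective (h : r ≤ s) : Function.Surjective (map_of_le h) := by
  rintro ⟨x⟩
  exact ⟨Quotient.mk r x, rfl⟩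

variable [Finite α]

lemma card_quotient_le_of_le (h : r ≤ s) : Nat.card (Quotient s) ≤ Nat.card (Quotient r) :=
  Nat.card_le_card_of_surjective _ (map_of_le_surjective h)

lemma card_quotient_lt_of_le (h : r ≤ s) (hs : s a b) (hr : ¬ r a b) :
    Nat.card (Quotient s) < Nat.card (Quotient r) := by
  have := Fintype.ofFinite α
  simp only [Nat.card_eq_fintype_card]
  refine Fintype.card_lt_of_surjective_not_injective _ (map_of_le_surjective h)
    fun hinj => hr (Quotient.exact (hinj ?_))
  exact Quotient.sound hs

lemma card_quotient_le_card_quotient_mergeClasses_add_one :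
    Nat.card (Quotient r) ≤ Nat.card (Quotient (r.mergeClasses a b)) + 1 := by
  let f : α → Quotient r := fun x => if r x b then Quotient.mk r a else Quotient.mk r x
  have hcover : Set.univ ⊆ insert (Quotient.mk r b) (Set.range f) := by
    rintro ⟨x⟩ -
    by_cases hx : r x b
    · exact Or.inl (Quotient.sound hx)
    · exact Or.inr ⟨x, if_neg hx⟩
  calc Nat.card (Quotient r) = (Set.univ : Set (Quotient r)).ncard := (Set.ncard_univ _).symm
    _ ≤ (insert (Quotient.mk r b) (Set.range f)).ncard := Set.ncard_le_ncard hcover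
    _ ≤ (Set.range f).ncard + 1 := Set.ncard_insert_le _ _
    _ = Nat.card (Quotient (r.mergeClasses a b)) + 1 := by
      rw [← Nat.card_coe_set_eq, ← Nat.card_congr (quotientKerEquivRange f)]
      rfl

end Setoid

namespace MulAction

variable {G α : Type*} [Group G] [MulAction G α]

lemma orbitRel_smul {K : Subgroup G} {g : G} (hg : g ∈ K) (x : α) : orbitRel K α x (g • x) :=
  (orbitRel K α).symm' ⟨⟨g, hg⟩, rfl⟩

lemma orbitRel_closure_le {T : Set G} {s : Setoid α} (h : ∀ g ∈ T, ∀ x, s x (g • x)) :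
    orbitRel (Subgroup.closure T) α ≤ s := by
  have key : ∀ g ∈ Subgroup.closure T, ∀ x : α, s x (g • x) := by
    intro g hg
    induction hg using Subgroup.closure_induction with
    | mem g hg => exact h g hg
    | one => exact fun x => by simp
    | mul g g' _ _ ihg ihg' =>
      exact fun x => s.trans' (ihg' x) (by simpa [mul_smul] using ihg (g' • x))
    | inv g _ ihg => exact fun x => s.symm' (by simpa using ihg (g⁻¹ • x))
  rintro x y ⟨⟨g, hg⟩, rfl⟩
  exact s.symm' (key g hg y)

end MulAction

namespace Equiv.Perm

open MulAction Subgroup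

variable {α : Type*} {σ ρ : Perm α} {a b x y : α}

lemma orbitRel_zpowers_iff_sameCycle {π : Perm α} :
    orbitRel (zpowers π) α x y ↔ π.SameCycle x y := by
  constructor
  · rintro ⟨⟨g, hg⟩, rfl⟩
    obtain ⟨n, rfl⟩ := mem_zpowers_iff.mp hg
    exact SameCycle.symm ⟨n, rfl⟩
  · rintro ⟨n, rfl⟩
    exact orbitRel_smul (zpow_mem_zpowers π n) x

lemma orbitRel_closure_pair_of_sameCycle (h : (σ * ρ).SameCycle a b) :
    orbitRel (closure {σ, ρ}) α a b := by
  obtain ⟨i, rfl⟩ := h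
  have hmem : (σ * ρ) ^ i ∈ closure {σ, ρ} := by
    have hσ : σ ∈ closure {σ, ρ} := subset_closure (by simp)
    have hρ : ρ ∈ closure {σ, ρ} := subset_closure (by simp)
    exact zpow_mem (mul_mem hσ hρ) i
  simpa only [Perm.smul_def] using orbitRel_smul hmem a

variable [DecidableEq α]

lemma orbitRel_closure_le_mergeClasses {K : Subgroup (Perm α)} {T : Set (Perm α)}
    (hT : ∀ g ∈ T, g ∈ K ∨ g * swap a b ∈ K) :
    orbitRel (closure T) α ≤ (orbitRel K α).mergeClasses a b := by
  set r := orbitRel K α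
  refine orbitRel_closure_le fun g hg x => ?_
  rcases hT g hg with hgK | hπK
  · exact Setoid.le_mergeClasses (orbitRel_smul hgK x)
  have hπ : ∀ y, r y ((g * swap a b) y) := orbitRel_smul hπK
  have hg : g x = (g * swap a b) (swap a b x) := by simp
  rw [Perm.smul_def, hg]
  by_cases hxa : x = a
  · subst hxa
    rw [swap_apply_left]
    exact (r.mergeClasses x b).trans' Setoid.mergeClasses_rel (Setoid.le_mergeClasses (hπ b))
  by_cases hxb : x = b
  · subst hxb
    rw [swap_apply_right]
    exact (r.mergeClasses a x).trans' ((r.mergeClasses a x).symm' Setoid.mergeClasses_rel)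
      (Setoid.le_mergeClasses (hπ a))
  rw [swap_apply_of_ne_of_ne hxa hxb]
  exact Setoid.le_mergeClasses (hπ x)

lemma sameCycle_mul_swap_of_not_sameCycle [Finite α] {π : Perm α} (h : ¬π.SameCycle a b) :
    (π * swap a b).SameCycle a b := by
  set π' := π * swap a b
  by_contra h'
  have h'' : ¬π'.SameCycle (π b) b := by
    have hstep : π' a = π b := by simp [π']
    rwa [← hstep, sameCycle_apply_left]
  -- if `b` is never reached, the orbits of `π b` under `π` and `π'` coincide
  have hagree : ∀ n : ℕ, (π' ^ n) (π b) = (π ^ n) (π b) := by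
    intro n
    induction n with
    | zero => rfl
    | succ n ih =>
      have hna : (π ^ n) (π b) ≠ a := fun e =>
        h (e ▸ (sameCycle_pow_right.mpr (sameCycle_apply_right.mpr (SameCycle.refl π b)))).symm
      have hnb : (π ^ n) (π b) ≠ b := fun e => h'' <| by
        simpa only [ih, e] using sameCycle_pow_right (n := n) |>.mpr (SameCycle.refl π' (π b))
      rw [pow_succ', mul_apply, ih, pow_succ', mul_apply, mul_apply, swap_apply_of_ne_of_ne hna hnb]
  obtain ⟨n, hn⟩ := (sameCycle_apply_left.mpr (SameCycle.refl π b)).exists_nat_pow_eq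
  exact h'' <| by
    simpa only [hagree, hn] using sameCycle_pow_right (n := n) |>.mpr (SameCycle.refl π' (π b))

lemma orbitRel_zpowers_le_mergeClasses_mul_swap (π : Perm α) (a b : α) :
    orbitRel (zpowers π) α ≤
      (orbitRel (zpowers (π * swap a b)) α).mergeClasses a b := by
  rw [zpowers_eq_closure]
  refine orbitRel_closure_le_mergeClasses fun g hg => Or.inr ?_
  rw [Set.mem_singleton_iff.mp hg]
  exact mem_zpowers _

lemma orbitRel_closure_pair_mul_swap_le (σ ρ : Perm α) (a b : α) :
    orbitRel (closure {σ, ρ * swap a b}) α ≤ (orbitRel (closure {σ, ρ}) α).mergeClasses a b := by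
  refine orbitRel_closure_le_mergeClasses ?_
  rintro g (rfl | rfl)
  · exact Or.inl (subset_closure (by simp))
  · exact Or.inr (by rw [mul_swap_mul_self]; exact subset_closure (by simp))

lemma orbitRel_closure_pair_le_mul_swap (σ ρ : Perm α) (a b : α) :
    orbitRel (closure {σ, ρ}) α ≤ (orbitRel (closure {σ, ρ * swap a b}) α).mergeClasses a b := by
  have h := orbitRel_closure_pair_mul_swap_le σ (ρ * swap a b) a b
  rwa [mul_swap_mul_self] at h

variable [Finite α]

lemma card_orbitRel_closure_pair_mul_swap_le (hb : ρ b = b) :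
    Nat.card (orbitRel.Quotient (closure {σ, ρ * swap a b}) α) ≤
      Nat.card (orbitRel.Quotient (closure {σ, ρ}) α) := by
  have hab : orbitRel (closure {σ, ρ * swap a b}) α a b := by
    simpa [hb] using orbitRel_smul (subset_closure (by simp) : ρ * swap a b ∈ _) a
  exact Setoid.card_quotient_le_of_le
    ((orbitRel_closure_pair_le_mul_swap σ ρ a b).trans (Setoid.mergeClasses_le le_rfl hab))

lemma card_orbitRel_closure_pair_le_mul_swap (hab : orbitRel (closure {σ, ρ}) α a b) :
    Nat.card (orbitRel.Quotient (closure {σ, ρ}) α) ≤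
      Nat.card (orbitRel.Quotient (closure {σ, ρ * swap a b}) α) :=
  Setoid.card_quotient_le_of_le
    ((orbitRel_closure_pair_mul_swap_le σ ρ a b).trans (Setoid.mergeClasses_le le_rfl hab))

lemma card_orbitRel_closure_pair_le_mul_swap_add_one :
    Nat.card (orbitRel.Quotient (closure {σ, ρ}) α) ≤
      Nat.card (orbitRel.Quotient (closure {σ, ρ * swap a b}) α) + 1 :=
  Setoid.card_quotient_le_card_quotient_mergeClasses_add_one.trans
    (Nat.add_le_add_right
      (Setoid.card_quotient_le_of_le (orbitRel_closure_pair_mul_swap_le σ ρ a b)) 1)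

end Equiv.Perm

section RibbonGraph

open Equiv Perm MulAction

lemma permOrbits_mul_swap_le {α : Type*} [Fintype α] [DecidableEq α] (π : Perm α) (a b : α) :
    permOrbits (π * swap a b) ≤ permOrbits π + 1 :=
  (Setoid.card_quotient_le_card_quotient_mergeClasses_add_one).trans
    (Nat.add_le_add_right
      (Setoid.card_quotient_le_of_le (orbitRel_zpowers_le_mergeClasses_mul_swap π a b)) 1)

lemma permOrbits_mul_swap_lt {α : Type*} [Fintype α] [DecidableEq α] {π : Perm α} {a b : α}
    (h : ¬π.SameCycle a b) :
    permOrbits (π * swap a b) < permOrbits π := by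
  have hab : orbitRel (Subgroup.zpowers (π * swap a b)) α a b :=
    orbitRel_zpowers_iff_sameCycle.mpr (sameCycle_mul_swap_of_not_sameCycle h)
  exact Setoid.card_quotient_lt_of_le
    ((orbitRel_zpowers_le_mergeClasses_mul_swap π a b).trans (Setoid.mergeClasses_le le_rfl hab))
    hab (mt orbitRel_zpowers_iff_sameCycle.mp h)

variable {H : Type*} {σ θ : Perm H} {S : Finset H} {a : H}

lemma theta_notMem (hS : ∀ x ∈ S, θ x ∈ S) (hinv : ∀ x, θ (θ x) = x) (ha : a ∉ S) :
    θ a ∉ S :=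
  fun h => ha (hinv a ▸ hS _ h)

variable [DecidableEq H]

lemma restrictPerm_apply (hS : ∀ x ∈ S, θ x ∈ S) (hinv : ∀ x, θ (θ x) = x) (x : H) :
    restrictPerm θ S x = if x ∈ S then θ x else x := by
  rw [restrictPerm, dif_pos ⟨hS, hinv⟩]
  rfl

lemma restrictPerm_empty (hinv : ∀ x, θ (θ x) = x) : restrictPerm θ ∅ = 1 := by
  ext x
  simp [restrictPerm_apply (S := ∅) (by simp) hinv]

lemma insert_edge_invariant (hS : ∀ x ∈ S, θ x ∈ S) (hinv : ∀ x, θ (θ x) = x) :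
    ∀ x ∈ insert a (insert (θ a) S), θ x ∈ insert a (insert (θ a) S) := by
  simp only [mem_insert]
  rintro x (rfl | rfl | hx)
  · exact Or.inr (Or.inl rfl)
  · exact Or.inl (hinv a)
  · exact Or.inr (Or.inr (hS x hx))

lemma restrictPerm_insert_edge (hS : ∀ x ∈ S, θ x ∈ S) (hinv : ∀ x, θ (θ x) = x) (ha : a ∉ S) :
    restrictPerm θ (insert a (insert (θ a) S)) = restrictPerm θ S * swap a (θ a) := by
  have hθa := theta_notMem hS hinv ha
  ext x
  rw [restrictPerm_apply (insert_edge_invariant hS hinv) hinv, mul_apply,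
    restrictPerm_apply hS hinv]
  rcases eq_or_ne x a with rfl | hxa
  · simp [hθa]
  rcases eq_or_ne x (θ a) with rfl | hxb
  · simp [ha, hinv]
  simp [swap_apply_of_ne_of_ne hxa hxb, hxa, hxb]

lemma eCount_insert_edge (hS : ∀ x ∈ S, θ x ∈ S) (hinv : ∀ x, θ (θ x) = x) (hfp : θ a ≠ a)
    (ha : a ∉ S) : eCount (insert a (insert (θ a) S)) = eCount S + 1 := by
  have hcard : (insert a (insert (θ a) S)).card = S.card + 2 := by
    rw [card_insert_of_notMem (by simp [ha, hfp.symm]),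
      card_insert_of_notMem (theta_notMem hS hinv ha)]
  simp [eCount, hcard, Nat.add_div_right]

variable [Fintype H]

/-- By Euler's formula `v - e + bc = 2k - 2g`, this is twice the genus of the surface of `S`. -/
noncomputable def twiceGenus (σ θ : Perm H) (S : Finset H) : ℤ :=
  kCount σ θ S - bcCount σ θ S + nCount σ θ S

lemma twiceGenus_empty (hinv : ∀ x, θ (θ x) = x) : twiceGenus σ θ ∅ = 0 := by
  have hk : kCount σ θ ∅ = vCount σ := by
    rw [kCount, restrictPerm_empty hinv, Set.pair_comm, Subgroup.closure_insert_one,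
      ← Subgroup.zpowers_eq_closure]
    rfl
  have hbc : bcCount σ θ ∅ = vCount σ := by
    rw [bcCount, restrictPerm_empty hinv, mul_one]
    rfl
  simp [twiceGenus, nCount, rCount, eCount, hk, hbc]

lemma twiceGenus_le_insert_edge (hS : ∀ x ∈ S, θ x ∈ S) (hinv : ∀ x, θ (θ x) = x)
    (hfp : θ a ≠ a) (ha : a ∉ S) :
    twiceGenus σ θ S ≤ twiceGenus σ θ (insert a (insert (θ a) S)) := by
  have hρ := restrictPerm_insert_edge hS hinv ha
  have hρb : restrictPerm θ S (θ a) = θ a := by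
    rw [restrictPerm_apply hS hinv, if_neg (theta_notMem hS hinv ha)]
  have hk : kCount σ θ (insert a (insert (θ a) S)) ≤ kCount σ θ S := by
    rw [kCount, kCount, hρ]
    exact card_orbitRel_closure_pair_mul_swap_le hρb
  have hbc : bcCount σ θ (insert a (insert (θ a) S)) =
      permOrbits (σ * restrictPerm θ S * swap a (θ a)) := by
    rw [bcCount, hρ, mul_assoc]
  have hbc₀ : bcCount σ θ S = permOrbits (σ * restrictPerm θ S) := rfl
  simp only [twiceGenus, nCount, rCount, eCount_insert_edge hS hinv hfp ha]
  by_cases hφ : (σ * restrictPerm θ S).SameCycle a (θ a)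
  · have hbc' := permOrbits_mul_swap_le (σ * restrictPerm θ S) a (θ a)
    have hk' : kCount σ θ S ≤ kCount σ θ (insert a (insert (θ a) S)) := by
      rw [kCount, kCount, hρ]
      exact card_orbitRel_closure_pair_le_mul_swap (orbitRel_closure_pair_of_sameCycle hφ)
    omega
  · have hbc' := permOrbits_mul_swap_lt hφ
    have hk' : kCount σ θ S ≤ kCount σ θ (insert a (insert (θ a) S)) + 1 := by
      rw [kCount, kCount, hρ]
      exact card_orbitRel_closure_pair_le_mul_swap_add_one
    omega

lemma twiceGenus_mono (hinv : ∀ x, θ (θ x) = x) (hfp : ∀ x, θ x ≠ x) {S T : Finset H}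
    (hS : ∀ x ∈ S, θ x ∈ S) (hT : ∀ x ∈ T, θ x ∈ T) (hST : S ⊆ T) :
    twiceGenus σ θ S ≤ twiceGenus σ θ T := by
  obtain rfl | ⟨a, haT, haS⟩ := (eq_or_ne S T).imp id fun h =>
    exists_of_ssubset (hST.ssubset_of_ne h)
  · exact le_rfl
  have hsub : insert a (insert (θ a) S) ⊆ T := by
    simp only [insert_subset_iff]
    exact ⟨haT, hT a haT, hST⟩
  exact (twiceGenus_le_insert_edge hS hinv (hfp a) haS).trans
    (twiceGenus_mono hinv hfp (insert_edge_invariant hS hinv) hT hsub)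
termination_by (T \ S).card
decreasing_by
  refine card_lt_card ((ssubset_iff_of_subset (sdiff_subset_sdiff subset_rfl ?_)).2
    ⟨a, by simp [haT, haS], by simp⟩)
  exact (subset_insert _ _).trans (subset_insert _ _)

end RibbonGraph

/-- **Genus-zero lemma for spanning subgraphs.**  If an orientable ribbon graph
encoded by a combinatorial map `(H, σ, θ)` has genus zero, i.e.
`k(E) - bc(E) + n(E) = 0`, then `k(F) - bc(F) + n(F) = 0` for every spanning
subgraph `F ⊆ E` (encoded by a `θ`-invariant set `S` of half-edges). -/
theorem genus_zero_of_spanning_subgraph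
    {H : Type*} [Fintype H] [DecidableEq H] (σ θ : Equiv.Perm H)
    (hinv : ∀ a, θ (θ a) = a) (hfp : ∀ a, θ a ≠ a)
    (hgenus : (kCount σ θ (Finset.univ : Finset H) : ℤ) -
        (bcCount σ θ (Finset.univ : Finset H) : ℤ) +
        nCount σ θ (Finset.univ : Finset H) = 0) :
    ∀ S : Finset H, (∀ a ∈ S, θ a ∈ S) →
      (kCount σ θ S : ℤ) - (bcCount σ θ S : ℤ) + nCount σ θ S = 0 := by
  intro S hS
  have hle : twiceGenus σ θ S ≤ twiceGenus σ θ univ :=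
    twiceGenus_mono hinv hfp hS (fun x _ => mem_univ (θ x)) (subset_univ S)
  have hge : twiceGenus σ θ ∅ ≤ twiceGenus σ θ S :=
    twiceGenus_mono hinv hfp (by simp) hS (empty_subset S)
  rw [twiceGenus_empty hinv] at hge
  exact le_antisymm (hle.trans_eq hgenus) hge
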